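/- Let V be a unital commutative associative ℂ-algebra, D_l : V → V a ℂ-linear map, l ≥ 1, and n ≥ l+1. Then for all f_1,…,f_n ∈ V one has F_l(0,…,0; n−l−1)(f_1,…,f_n) = D_l(f_1⋯f_n) − Σ_{I ⊆ {1,…,n}, 1 ≤ |I| ≤ l} (−1)^{l−|I|} · binom(n−1−|I|, l−|I|) · D_l(f_I) · f_{{1,…,n}∖I}. In particular, F_l(0,…,0; n−l−1) vanishes identically for all n ≥ l+1 if and only if D_l satisfies the identity of Proposition 'identities-diff' for all n ≥ l+1. -/

import Mathlib

/-- The Koszul bracket hierarchy of an operator `D` on a commutative algebra: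
`⟨f⟩₁ = D f` and
`⟨f₁,…,f_{l+1}⟩_{l+1} = ⟨f₁,…,f_{l-1},f_l·f_{l+1}⟩_l − ⟨f₁,…,f_l⟩_l·f_{l+1} − f_l·⟨f₁,…,f_{l-1},f_{l+1}⟩_l`. -/
def koszul {V : Type*} [CommRing V] (D : V → V) : (l : ℕ) → (Fin l → V) → V
  | 0, _ => 0
  | 1, f => D (f 0)
  | l + 2, f =>
      koszul D (l + 1)
        (Fin.snoc (fun i : Fin l => f i.castSucc.castSucc)
          (f ⟨l, by omega⟩ * f ⟨l + 1, by omega⟩))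
      - koszul D (l + 1) (fun i => f i.castSucc) * f ⟨l + 1, by omega⟩
      - f ⟨l, by omega⟩ *
          koszul D (l + 1)
            (Fin.snoc (fun i : Fin l => f i.castSucc.castSucc) (f ⟨l + 1, by omega⟩))

/-- `D` is a differential operator of order at most `l` if the `(l+1)`-st Koszul
bracket vanishes identically. -/
def IsDiffOpOfOrderAtMost {V : Type*} [CommRing V] (D : V → V) (l : ℕ) : Prop :=
  ∀ f : Fin (l + 1) → V, koszul D (l + 1) f = 0
/-- The genus-0 correlator `⟨τ_{a₁}⋯τ_{a_m}⟩₀` of the one-dimensional TFT,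
on the multiset of indices: `(m−3)!/(a₁!⋯a_m!)` if `m ≥ 3` and
`a₁+⋯+a_m = m−3`, and `0` otherwise. -/
noncomputable def corr (s : Multiset ℕ) : ℂ :=
  if 3 ≤ Multiset.card s ∧ s.sum = Multiset.card s - 3 then
    ((Multiset.card s - 3).factorial : ℂ) / (((s.map Nat.factorial).prod : ℕ) : ℂ)
  else 0

/-- The expression `F_l(d₁,…,d_n; d₀)(f₁,…,f_n)` computing the pairing of the
Givental-deformed genus-0 TFT classes with `ψ`-monomials:
`F_l(d;d₀)(f) = c(d₀+l−1,d₁,…,d_n)·D_l(f₁⋯f_n)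
 + (−1)^l Σ_m c(d₀,d₁,…,d_m+l−1,…,d_n)·f₁⋯D_l(f_m)⋯f_n
 + Σ_{I⊔J={1,…,n}, |I|≥2, i+j=l−2} (−1)^{j+1} c(i,d_I) c(d₀,j,d_J)·D_l(f_I)·f_J`. -/
noncomputable def Fgiv {V : Type*} [CommRing V] [Algebra ℂ V] (D : V → V) (l : ℕ)
    {n : ℕ} (d : Fin n → ℕ) (d0 : ℕ) (f : Fin n → V) : V :=
  corr ((d0 + l - 1) ::ₘ Multiset.map d Finset.univ.val) • D (∏ i, f i)
    + (-1 : ℂ) ^ l •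
        ∑ m : Fin n,
          corr (d0 ::ₘ (d m + l - 1) ::ₘ Multiset.map d (Finset.univ.erase m).val) •
            (D (f m) * ∏ i ∈ Finset.univ.erase m, f i)
    + ∑ I ∈ Finset.univ.powerset.filter (fun I : Finset (Fin n) => 2 ≤ I.card),
        ∑ j ∈ Finset.range (l - 1),
          ((-1 : ℂ) ^ (j + 1) * corr ((l - 2 - j) ::ₘ Multiset.map d I.val)
              * corr (d0 ::ₘ j ::ₘ Multiset.map d Iᶜ.val)) •
            (D (∏ i ∈ I, f i) * ∏ i ∈ Iᶜ, f i)

/-- For `l ≥ 1` and `n ≥ l+1`, the most symmetric expression satisfies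
`F_l(0,…,0; n−l−1)(f₁,…,f_n) = D_l(f₁⋯f_n) − Σ_{1≤|I|≤l} (−1)^{l−|I|} binom(n−1−|I|,l−|I|) D_l(f_I) f_{Iᶜ}`;
in particular `F_l(0,…,0;n−l−1)` vanishes identically for all `n ≥ l+1` iff
`D_l` satisfies the identity of Proposition `identities-diff` for all `n ≥ l+1`. -/
lemma corr_one_zeros (a k : ℕ) :
    corr (a ::ₘ Multiset.replicate k 0) = if 2 ≤ k ∧ a = k - 2 then 1 else 0 := by
  unfold corr
  simp only [Multiset.card_cons, Multiset.card_replicate, Multiset.sum_cons,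
    Multiset.sum_replicate, smul_zero, add_zero, Multiset.map_cons, Multiset.map_replicate,
    Nat.factorial_zero, Multiset.prod_cons, Multiset.prod_replicate, one_pow, mul_one]
  by_cases h : 2 ≤ k ∧ a = k - 2
  · rw [if_pos (by omega), if_pos h]
    have : k + 1 - 3 = a := by omega
    rw [this, div_self (by exact_mod_cast Nat.factorial_ne_zero a)]
  · rw [if_neg (by omega), if_neg h]

lemma corr_two_zeros (a b k : ℕ) :
    corr (a ::ₘ b ::ₘ Multiset.replicate k 0) =
      if 1 ≤ k ∧ a + b = k - 1 then ((a + b).choose a : ℂ) else 0 := by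
  unfold corr
  simp only [Multiset.card_cons, Multiset.card_replicate, Multiset.sum_cons,
    Multiset.sum_replicate, smul_zero, add_zero, Multiset.map_cons, Multiset.map_replicate,
    Nat.factorial_zero, Multiset.prod_cons, Multiset.prod_replicate, one_pow, mul_one]
  by_cases h : 1 ≤ k ∧ a + b = k - 1
  · rw [if_pos (by omega), if_pos h]
    have h1 : k + 1 + 1 - 3 = a + b := by omega
    rw [h1]
    have h2 : (a + b).choose a * a.factorial * b.factorial = (a + b).factorial := by
      have := Nat.choose_mul_factorial_mul_factorial (Nat.le_add_right a b)
      rwa [Nat.add_sub_cancel_left] at this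
    rw [← h2]
    push_cast
    have ha : (a.factorial:ℂ) ≠ 0 := by exact_mod_cast Nat.factorial_ne_zero a
    have hb : (b.factorial:ℂ) ≠ 0 := by exact_mod_cast Nat.factorial_ne_zero b
    field_simp
  · rw [if_neg (by omega), if_neg h]



lemma card_val' {α : Type*} (s : Finset α) : Multiset.card s.val = s.card := rfl

lemma keyB {V : Type*} [CommRing V] [Algebra ℂ V] (k C : ℕ) (x : V) :
    ((-1:ℂ)^(k+1) * (C:ℂ)) • x = -((-1:V)^k * (C:V) * x) := by
  have h : ((-1:ℂ)^(k+1) * (C:ℂ)) = (((-1)^(k+1) * C : ℤ) : ℂ) := by push_cast; ring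
  rw [h, Int.cast_smul_eq_zsmul, zsmul_eq_mul]
  push_cast
  ring

lemma keyA {V : Type*} [CommRing V] [Algebra ℂ V] (l C : ℕ) (hl : 1 ≤ l) (x : V) :
    ((-1:ℂ)^l * (C:ℂ)) • x = -((-1:V)^(l-1) * (C:V) * x) := by
  have hp : (-1:ℂ)^l = (-1:ℂ)^((l-1)+1) := by congr 1; omega
  rw [hp]; exact keyB (l-1) C x

lemma Fgiv_main {V : Type*} [CommRing V] [Algebra ℂ V]
    (D : V →ₗ[ℂ] V) (l : ℕ) (hl : 1 ≤ l) (n : ℕ) (hn : l + 1 ≤ n) (f : Fin n → V) :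
        Fgiv (⇑D) l (fun _ : Fin n => 0) (n - l - 1) f =
          D (∏ i, f i) -
            ∑ I ∈ Finset.univ.powerset.filter
                (fun I : Finset (Fin n) => 1 ≤ I.card ∧ I.card ≤ l),
              (-1 : V) ^ (l - I.card) * ((n - 1 - I.card).choose (l - I.card) : V) *
                D (∏ i ∈ I, f i) * ∏ i ∈ Iᶜ, f i := by
  simp only [Fgiv, Multiset.map_const', card_val', Finset.card_univ, Fintype.card_fin,
    Finset.card_erase_of_mem (Finset.mem_univ _), Finset.card_compl, corr_one_zeros,
    corr_two_zeros]
  -- notation for the summand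
  set w : Finset (Fin n) → V := fun I =>
    (-1 : V) ^ (l - I.card) * ((n - 1 - I.card).choose (l - I.card) : V) *
      D (∏ i ∈ I, f i) * ∏ i ∈ Iᶜ, f i with hw
  -- singleton identification
  have hsing : (Finset.univ.powerset.filter (fun I : Finset (Fin n) => I.card = 1)) =
      Finset.univ.image (fun m : Fin n => ({m} : Finset (Fin n))) := by
    ext I; simp [Finset.card_eq_one, eq_comm]
  have hT2 : ∑ I ∈ Finset.univ.powerset.filter (fun I : Finset (Fin n) => I.card = 1), w I =
      ∑ m : Fin n, (-1 : V) ^ (l - 1) * ((n - 1 - 1).choose (l - 1) : V) *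
        D (f m) * ∏ i ∈ Finset.univ.erase m, f i := by
    rw [hsing, Finset.sum_image (by intro a _ b _ h; simpa using h)]
    apply Finset.sum_congr rfl; intro m _
    simp [hw, Finset.compl_singleton]
  -- term 2 as goal shape
  have hT2' : (-1:ℂ)^l • (∑ m : Fin n,
        (((n - l - 1 + (0 + l - 1)).choose (n - l - 1) : ℕ) : ℂ) •
          (D (f m) * ∏ i ∈ Finset.univ.erase m, f i)) =
      - ∑ I ∈ Finset.univ.powerset.filter (fun I : Finset (Fin n) => I.card = 1), w I := by
    rw [hT2, Finset.smul_sum, ← Finset.sum_neg_distrib]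
    apply Finset.sum_congr rfl; intro m _
    rw [smul_smul, keyA l _ hl]
    have e1 : n - l - 1 + (0 + l - 1) = n - 1 - 1 := by omega
    have e2 : n - l - 1 = (n - 1 - 1) - (l - 1) := by omega
    rw [e1, e2, Nat.choose_symm (by omega)]
    ring
  -- term 3
  have hinner : ∀ I ∈ Finset.univ.powerset.filter (fun I : Finset (Fin n) => 2 ≤ I.card),
      (∑ j ∈ Finset.range (l-1),
        (((-1:ℂ)^(j+1) * if 2 ≤ I.card ∧ l - 2 - j = I.card - 2 then 1 else 0) *
          if 1 ≤ n - I.card ∧ n - l - 1 + j = n - I.card - 1 then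
            (((n - l - 1 + j).choose (n - l - 1) : ℕ) : ℂ) else 0) •
          (D (∏ i ∈ I, f i) * ∏ i ∈ Iᶜ, f i))
      = if 2 ≤ I.card ∧ I.card ≤ l then - w I else 0 := by
    intro I hI
    simp only [Finset.mem_filter, Finset.mem_powerset] at hI
    obtain ⟨hIsub, hI2⟩ := hI
    have hIn : I.card ≤ n := I.card_le_univ.trans_eq (by simp)
    by_cases h : I.card ≤ l
    · rw [if_pos ⟨hI2, h⟩]
      rw [Finset.sum_eq_single_of_mem (l - I.card) (Finset.mem_range.mpr (by omega))]
      · rw [if_pos ⟨hI2, by omega⟩, if_pos ⟨by omega, by omega⟩, mul_one]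
        have e1 : n - l - 1 + (l - I.card) = n - 1 - I.card := by omega
        have e2 : n - l - 1 = (n - 1 - I.card) - (l - I.card) := by omega
        rw [e1, e2, Nat.choose_symm (by omega), keyB]
        rw [hw]; ring
      · intro j hj hne
        simp only [Finset.mem_range] at hj
        rw [if_neg (by omega), mul_zero, zero_mul, zero_smul]
    · rw [if_neg (by omega)]
      apply Finset.sum_eq_zero; intro j hj
      simp only [Finset.mem_range] at hj
      rw [if_neg (by omega), mul_zero, zero_mul, zero_smul]
  have hT3' : (∑ I ∈ Finset.univ.powerset.filter (fun I : Finset (Fin n) => 2 ≤ I.card),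
      ∑ j ∈ Finset.range (l-1),
        (((-1:ℂ)^(j+1) * if 2 ≤ I.card ∧ l - 2 - j = I.card - 2 then 1 else 0) *
          if 1 ≤ n - I.card ∧ n - l - 1 + j = n - I.card - 1 then
            (((n - l - 1 + j).choose (n - l - 1) : ℕ) : ℂ) else 0) •
          (D (∏ i ∈ I, f i) * ∏ i ∈ Iᶜ, f i))
      = - ∑ I ∈ Finset.univ.powerset.filter
            (fun I : Finset (Fin n) => 2 ≤ I.card ∧ I.card ≤ l), w I := by
    rw [Finset.sum_congr rfl hinner, ← Finset.sum_filter, Finset.filter_filter,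
      ← Finset.sum_neg_distrib]
    apply Finset.sum_congr _ (fun _ _ => rfl)
    apply Finset.filter_congr
    intro I _
    simp only [and_iff_right_iff_imp]
    tauto
  have hsplit : ∑ I ∈ Finset.univ.powerset.filter
        (fun I : Finset (Fin n) => 1 ≤ I.card ∧ I.card ≤ l), w I =
      (∑ I ∈ Finset.univ.powerset.filter (fun I : Finset (Fin n) => I.card = 1), w I) +
      ∑ I ∈ Finset.univ.powerset.filter
        (fun I : Finset (Fin n) => 2 ≤ I.card ∧ I.card ≤ l), w I := by
    rw [← Finset.sum_filter_add_sum_filter_not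
        (Finset.univ.powerset.filter (fun I : Finset (Fin n) => 1 ≤ I.card ∧ I.card ≤ l))
        (fun I => I.card = 1) w, Finset.filter_filter, Finset.filter_filter]
    congr 1
    · apply Finset.sum_congr _ (fun _ _ => rfl)
      apply Finset.filter_congr; intro I _; constructor
      · rintro ⟨_, h⟩; exact h
      · intro h; exact ⟨⟨by omega, by omega⟩, h⟩
    · apply Finset.sum_congr _ (fun _ _ => rfl)
      apply Finset.filter_congr; intro I _; constructor
      · rintro ⟨⟨h1, h2⟩, h3⟩; exact ⟨by omega, h2⟩
      · rintro ⟨h1, h2⟩; exact ⟨⟨by omega, h2⟩, by omega⟩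
  rw [if_pos (⟨by omega, by omega⟩ : 2 ≤ n ∧ n - l - 1 + l - 1 = n - 2), one_smul,
    if_pos (⟨by omega, by omega⟩ : 1 ≤ n - 1 ∧ n - l - 1 + (0 + l - 1) = n - 1 - 1)]
  rw [hT2', hT3', hsplit]
  ring

theorem Fgiv_symmetric_formula {V : Type*} [CommRing V] [Algebra ℂ V]
    (D : V →ₗ[ℂ] V) (l : ℕ) (hl : 1 ≤ l) :
    (∀ n, l + 1 ≤ n → ∀ f : Fin n → V,
        Fgiv (⇑D) l (fun _ : Fin n => 0) (n - l - 1) f =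
          D (∏ i, f i) -
            ∑ I ∈ Finset.univ.powerset.filter
                (fun I : Finset (Fin n) => 1 ≤ I.card ∧ I.card ≤ l),
              (-1 : V) ^ (l - I.card) * ((n - 1 - I.card).choose (l - I.card) : V) *
                D (∏ i ∈ I, f i) * ∏ i ∈ Iᶜ, f i)
      ∧ ((∀ n, l + 1 ≤ n → ∀ f : Fin n → V,
            Fgiv (⇑D) l (fun _ : Fin n => 0) (n - l - 1) f = 0) ↔
          (∀ n, l + 1 ≤ n → ∀ f : Fin n → V,
            D (∏ i, f i) =
              ∑ I ∈ Finset.univ.powerset.filter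
                  (fun I : Finset (Fin n) => 1 ≤ I.card ∧ I.card ≤ l),
                (-1 : V) ^ (l - I.card) * ((n - 1 - I.card).choose (l - I.card) : V) *
                  D (∏ i ∈ I, f i) * ∏ i ∈ Iᶜ, f i)) := by
  refine ⟨fun n hn f => Fgiv_main D l hl n hn f, ?_⟩
  constructor
  · intro h n hn f
    have h2 := Fgiv_main D l hl n hn f
    rw [h n hn f] at h2
    exact sub_eq_zero.mp h2.symm
  · intro h n hn f
    rw [Fgiv_main D l hl n hn f, ← h n hn f, sub_self]
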